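/- arXiv:math/0110007 — 3 statements merged into one kernel-verified Lean document; each statement's English description precedes it below -/
import Mathlib

section
/- For every positive integer r, the Fibonacci number f_{2r} equals the alternating sum of ballot/Catalan-type numbers: f_{2r} = c(2r, r-1) - c(2r, r-3) + c(2r, r-6) - c(2r, r-8) + c(2r, r-11) - c(2r, r-13) + ..., where the offsets subtracted from r follow the pattern 1,3,6,8,11,13,16,... (alternating increments of 2 and 3), the sum terminating when the lower index becomes negative. -/
/-!
Let `T = walkStep` act on `g : ZMod 5 → ℤ` by `(T g) x = g (x - 1) + g (x + 1)`; by Pascal's rule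
`∑ k, C(n, k) g(2k - n) = (Tⁿ g) 0`. The weight `χ = fibWeight`, minus the Legendre symbol mod 5,
is orthogonal to the constants, so it lies in the eigenspaces of `T` for `ζ + ζ⁻¹ = -ψ` and
`ζ² + ζ⁻² = -φ`, the roots of `y² + y - 1`; hence `T²χ + Tχ = χ` and `(Tⁿ χ) 0 = (-1)ⁿ 2 fₙ`.
For `n = 2r` the binomial sum is symmetric about `k = r`, where `χ` vanishes, so `f_{2r}` is half
of it. Grouping the alternating sum of ballot numbers
`c(2r, r - offset m) = C(2r, r - offset m) - C(2r, r - offset m - 1)` into blocks of five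
consecutive binomials `C(2r, r - 1 - d)` produces exactly the coefficients `χ(-2(d + 1))`.
-/
/-- binomial coefficient C(n,j) with C(n,j) = 0 for j < 0, as an integer -/
def C (n : ℕ) (j : ℤ) : ℤ := if j < 0 then 0 else (n.choose j.toNat : ℤ)

/-- c(n,j) = C(n,j) - C(n,j-1) -/
def c (n : ℕ) (j : ℤ) : ℤ := C n j - C n (j - 1)

/-- the m-th offset: 1, 3, 6, 8, 11, 13, 16, … -/
def offset (m : ℕ) : ℤ := 5 * (m / 2) + if m % 2 = 0 then 1 else 3

open Finset

section Walk

variable {G M : Type*} [AddGroupWithOne G] [AddCommMonoid M]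

def walkStep : AddMonoid.End (G → M) where
  toFun g x := g (x - 1) + g (x + 1)
  map_zero' := by ext; simp
  map_add' f g := by ext; simp only [Pi.add_apply]; abel

@[simp]
lemma walkStep_apply (g : G → M) (x : G) : walkStep g x = g (x - 1) + g (x + 1) := rfl

lemma walkStep_pow_succ_apply (n : ℕ) (g : G → M) :
    (walkStep ^ (n + 1)) g = (walkStep ^ n) (walkStep g) := by
  rw [pow_succ]; rfl

theorem sum_range_choose_nsmul_eq_walkStep_pow (n : ℕ) (g : G → M) :
    ∑ k ∈ range (n + 1), n.choose k • g ((2 * k - n : ℤ) : G) = (walkStep ^ n) g 0 := by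
  induction n generalizing g with
  | zero => simp
  | succ n ih =>
    rw [walkStep_pow_succ_apply, ← ih,
      sum_choose_succ_nsmul (fun k _ => g ((2 * k - (n + 1 : ℕ) : ℤ) : G)) n, ← sum_add_distrib]
    refine sum_congr rfl fun k _ => ?_
    have hdown : ((2 * k - (n + 1 : ℕ) : ℤ) : G) = ((2 * k - n : ℤ) : G) - 1 := by
      rw [← Int.cast_one, ← Int.cast_sub]; congr 1; push_cast; ring
    have hup : ((2 * (k + 1 : ℕ) - (n + 1 : ℕ) : ℤ) : G) = ((2 * k - n : ℤ) : G) + 1 := by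
      rw [← Int.cast_one, ← Int.cast_add]; congr 1; push_cast; ring
    rw [walkStep_apply, nsmul_add, hdown, hup]

theorem sum_range_two_mul_add_one_of_reflect (f : ℕ → M) (r : ℕ)
    (hf : ∀ k < r, f (2 * r - k) = f k) :
    ∑ k ∈ range (2 * r + 1), f k = f r + 2 • ∑ k ∈ range r, f k := by
  have upper : ∑ i ∈ range r, f (r + 1 + i) = ∑ k ∈ range r, f k := by
    rw [← sum_range_reflect f r]
    refine sum_congr rfl fun i hi => ?_
    have hi : i < r := mem_range.1 hi
    rw [← hf (r - 1 - i) (by omega)]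
    congr 1; omega
  rw [show 2 * r + 1 = (r + 1) + r by ring, sum_range_add, upper, sum_range_succ]
  abel

end Walk

def fibWeight : ZMod 5 → ℤ := ![0, -1, 1, 1, -1]

lemma fibWeight_neg (t : ZMod 5) : fibWeight (-t) = fibWeight t := by
  fin_cases t <;> rfl

lemma walkStep_sq_add_walkStep_fibWeight :
    (walkStep ^ 2) fibWeight + walkStep fibWeight = fibWeight := by
  ext x; fin_cases x <;> rfl

lemma walkStep_pow_fibWeight_zero (n : ℕ) :
    (walkStep ^ n) fibWeight 0 = (-1) ^ n * 2 * Nat.fib n := by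
  induction n using Nat.twoStepInduction with
  | zero => rfl
  | one => rfl
  | more n ih₀ ih₁ =>
    have key : (walkStep ^ (n + 2)) fibWeight 0 + (walkStep ^ (n + 1)) fibWeight 0
        = (walkStep ^ n) fibWeight 0 := by
      conv_rhs => rw [← walkStep_sq_add_walkStep_fibWeight]
      rw [map_add, pow_add, pow_succ]; rfl
    rw [ih₀, ih₁, pow_succ, pow_succ] at key
    rw [Nat.fib_add_two, pow_succ, pow_succ]
    push_cast
    linear_combination key

lemma sum_range_choose_mul_fibWeight (n : ℕ) :
    ∑ k ∈ range (n + 1), n.choose k * fibWeight (2 * k - n) = (-1) ^ n * 2 * Nat.fib n := by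
  simpa only [nsmul_eq_mul, Int.cast_sub, Int.cast_mul, Int.cast_natCast, Int.cast_ofNat]
    using (sum_range_choose_nsmul_eq_walkStep_pow n fibWeight).trans
    (walkStep_pow_fibWeight_zero n)

lemma C_of_neg {n : ℕ} {j : ℤ} (h : j < 0) : C n j = 0 := if_pos h

lemma C_natCast (n k : ℕ) : C n k = n.choose k := by
  rw [C, if_neg (by omega), Int.toNat_natCast]

lemma c_of_neg {n : ℕ} {j : ℤ} (h : j < 0) : c n j = 0 := by
  rw [c, C_of_neg h, C_of_neg (by omega), sub_zero]

lemma offset_two_mul (j : ℕ) : offset (2 * j) = 5 * j + 1 := by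
  unfold offset; split_ifs <;> omega

lemma offset_two_mul_add_one (j : ℕ) : offset (2 * j + 1) = 5 * j + 3 := by
  unfold offset; split_ifs <;> omega

lemma lt_offset (m : ℕ) : (m : ℤ) < offset m := by
  unfold offset; split_ifs <;> omega

lemma sum_alternating_offset_eq_sum_fibWeight (P : ℤ → ℤ) (x : ℤ) (K : ℕ) :
    ∑ m ∈ range (2 * K), (-1) ^ m * (P (x - offset m) - P (x - offset m - 1)) =
      ∑ d ∈ range (5 * K), fibWeight (-2 * (d + 1)) * P (x - 1 - d) := by
  induction K with
  | zero => simp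
  | succ K ih =>
    have hweight (s : ℕ) : fibWeight (-2 * ((5 * K + s : ℕ) + 1)) = fibWeight (-2 * (s + 1)) := by
      congr 1; push_cast; rw [show (5 : ZMod 5) = 0 from rfl]; ring
    rw [show 2 * (K + 1) = 2 * K + 1 + 1 by ring, show 5 * (K + 1) = 5 * K + 4 + 1 by ring]
    have hweight₀ := hweight 0
    rw [Nat.add_zero] at hweight₀
    have hvalues : fibWeight (-2 * ((0 : ℕ) + 1)) = 1 ∧ fibWeight (-2 * ((1 : ℕ) + 1)) = -1 ∧
        fibWeight (-2 * ((2 : ℕ) + 1)) = -1 ∧ fibWeight (-2 * ((3 : ℕ) + 1)) = 1 ∧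
        fibWeight (-2 * ((4 : ℕ) + 1)) = 0 := by decide
    obtain ⟨h0, h1, h2, h3, h4⟩ := hvalues
    simp only [sum_range_succ, ih, hweight, hweight₀, h0, h1, h2, h3, h4, offset_two_mul,
      offset_two_mul_add_one, pow_succ, pow_mul]
    push_cast
    ring_nf

lemma fib_two_mul_eq_sum_choose_mul_fibWeight (r : ℕ) :
    (Nat.fib (2 * r) : ℤ) = ∑ k ∈ range r, (2 * r).choose k * fibWeight (2 * k - 2 * r) := by
  have hsum := sum_range_choose_mul_fibWeight (2 * r)
  rw [sum_range_two_mul_add_one_of_reflect _ r] at hsum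
  · push_cast at hsum
    rw [sub_self, show fibWeight 0 = 0 from rfl, pow_mul, neg_one_sq, one_pow, nsmul_eq_mul,
      Nat.cast_ofNat] at hsum
    linarith
  · intro k hk
    rw [Nat.choose_symm (by omega), Nat.cast_sub (by omega), ← fibWeight_neg]
    push_cast
    ring_nf

lemma fib_two_mul_eq_sum_fibWeight_mul_C (r : ℕ) :
    (Nat.fib (2 * r) : ℤ) = ∑ d ∈ range r, fibWeight (-2 * (d + 1)) * C (2 * r) (r - 1 - d) := by
  rw [fib_two_mul_eq_sum_choose_mul_fibWeight, ← sum_range_reflect]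
  refine sum_congr rfl fun d hd => ?_
  have hd : d + 1 ≤ r := mem_range.1 hd
  have hcast : ((r - 1 - d : ℕ) : ℤ) = r - 1 - d := by omega
  rw [← hcast, C_natCast, mul_comm, Nat.sub_sub, Nat.cast_sub (by omega)]
  push_cast; ring_nf

theorem fib_eq_alternating_sum_of_ballot_numbers_general (r : ℕ) :
    (Nat.fib (2 * r) : ℤ) =
      ∑ m ∈ Finset.range (r + 1), (-1 : ℤ) ^ m * c (2 * r) ((r : ℤ) - offset m) := by
  calc (Nat.fib (2 * r) : ℤ)
      = ∑ d ∈ range r, fibWeight (-2 * (d + 1)) * C (2 * r) (r - 1 - d) :=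
      fib_two_mul_eq_sum_fibWeight_mul_C r
    _ = ∑ d ∈ range (5 * (r + 1)), fibWeight (-2 * (d + 1)) * C (2 * r) (r - 1 - d) := by
      refine sum_subset (range_subset_range.2 (by omega)) fun d _ hd => ?_
      rw [C_of_neg (by rw [mem_range] at hd; omega), mul_zero]
    _ = ∑ m ∈ range (2 * (r + 1)), (-1) ^ m * c (2 * r) (r - offset m) :=
      (sum_alternating_offset_eq_sum_fibWeight (C (2 * r)) r (r + 1)).symm
    _ = ∑ m ∈ range (r + 1), (-1) ^ m * c (2 * r) (r - offset m) := by
      refine (sum_subset (range_subset_range.2 (by omega)) fun m _ hm => ?_).symm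
      rw [c_of_neg (by have := lt_offset m; rw [mem_range] at hm; omega), mul_zero]

theorem fib_eq_alternating_sum_of_ballot_numbers (r : ℕ) (hr : 0 < r) :
    (Nat.fib (2 * r) : ℤ) =
      ∑ m ∈ Finset.range (r + 1), (-1 : ℤ) ^ m * c (2 * r) ((r : ℤ) - offset m) :=
  fib_eq_alternating_sum_of_ballot_numbers_general r
end

section
/- Let p ≥ 3 be a prime and let g = p. In Λ²(F_p^{2p}) with symplectic form ω = Σ_{i=1}^p a_i ∧ b_i, the vector v = ω - p·(a_1 ∧ b_1) = ω (mod p) satisfies F(v) = 0 (where F is the mod-p reduction of the adjoint of wedging with ω), and v is orthogonal to every element w of ker(F) ∩ Λ² with respect to the induced F_p-valued inner form: ⟨v, w⟩ = 0 for all such w. Hence the inner form on ker(F) ∩ Λ²(F_p^{2p}) is degenerate. -/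
/-!
STATEMENT 3.  Let p ≥ 3 be prime and g = p.  We work with the coordinate
model of Λ*(F_p^{2p}) as functions `Finset (Fin (2p)) → ZMod p` in the
monomial basis of the symplectic basis a_1,…,a_p,b_1,…,b_p (a_i ↦ index 2i,
b_i ↦ 2i+1).  `Fop` is the mod-p reduction of the adjoint of wedging with
ω = Σ a_i ∧ b_i (adjoint for the inner product `innerF` with orthonormal
monomial basis), `Ldeg 2` is Λ².  The vector v = ω - p·(a_1∧b_1) = ω (mod p)
has coordinates 1 exactly on the sets {a_i, b_i}.
-/

def ai (g : ℕ) (i : Fin g) : Fin (2 * g) := ⟨2 * i, by omega⟩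
def bi (g : ℕ) (i : Fin g) : Fin (2 * g) := ⟨2 * i + 1, by omega⟩

abbrev Lam (R : Type) (g : ℕ) := Finset (Fin (2 * g)) → R

def Eop (R : Type) [CommRing R] (g : ℕ) : Lam R g →ₗ[R] Lam R g where
  toFun f S := ∑ i ∈ Finset.univ.filter (fun i : Fin g => ai g i ∈ S ∧ bi g i ∈ S),
      f (S \ {ai g i, bi g i})
  map_add' f h := by funext S; simp [Finset.sum_add_distrib]
  map_smul' c f := by funext S; simp [Finset.mul_sum]

def Fop (R : Type) [CommRing R] (g : ℕ) : Lam R g →ₗ[R] Lam R g where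
  toFun f S := ∑ i ∈ Finset.univ.filter (fun i : Fin g => ai g i ∉ S ∧ bi g i ∉ S),
      f (insert (ai g i) (insert (bi g i) S))
  map_add' f h := by funext S; simp [Finset.sum_add_distrib]
  map_smul' c f := by funext S; simp [Finset.mul_sum]

def Ldeg (R : Type) [CommRing R] (g j : ℕ) : Submodule R (Lam R g) where
  carrier := {f | ∀ S, S.card ≠ j → f S = 0}
  add_mem' := by intro a b ha hb S hS; simp [Pi.add_apply, ha S hS, hb S hS]
  zero_mem' := by intro S _; rfl
  smul_mem' := by intro c f hf S hS; simp [Pi.smul_apply, hf S hS]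

def innerF (R : Type) [CommRing R] (g : ℕ) (f f' : Lam R g) : R :=
  ∑ S : Finset (Fin (2 * g)), f S * f' S

/-- the mod-p reduction v of ω = Σ a_i ∧ b_i in Λ²(F_p^{2p}) -/
def omegaModP (p : ℕ) : Lam (ZMod p) p :=
  fun S => if ∃ i : Fin p, S = {ai p i, bi p i} then 1 else 0

/-!
The vector `v` is `E(1)`, so `⟨v, w⟩ = ⟨1, F w⟩ = (F w)(∅)`, which vanishes when `F w = 0`.
On the other hand `F` lowers degree by two, so `F v` lives in degree zero, where it equals the
number of pairs `{a_i, b_i}`, namely `g = p = 0` in `ZMod p`.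
-/

lemma ai_ne_bi (g : ℕ) (i j : Fin g) : ai g i ≠ bi g j := by
  simp only [ai, bi, Ne, Fin.mk.injEq]; omega

def pairSet (g : ℕ) (i : Fin g) : Finset (Fin (2 * g)) := {ai g i, bi g i}

lemma card_pairSet (g : ℕ) (i : Fin g) : (pairSet g i).card = 2 :=
  Finset.card_pair (ai_ne_bi g i i)

lemma pairSet_injective (g : ℕ) : Function.Injective (pairSet g) := by
  intro i j h
  have : ai g i ∈ pairSet g j := h ▸ Finset.mem_insert_self _ _
  simp only [pairSet, Finset.mem_insert, Finset.mem_singleton, ai, bi, Fin.mk.injEq] at this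
  exact Fin.ext (by omega)

section Symplectic

variable (R : Type) [CommRing R] (g : ℕ)

lemma Fop_apply_empty (f : Lam R g) : Fop R g f ∅ = ∑ i : Fin g, f (pairSet g i) := by
  simp [Fop, pairSet]

lemma Fop_mem_Ldeg {j : ℕ} {f : Lam R g} (hf : f ∈ Ldeg R g (j + 2)) :
    Fop R g f ∈ Ldeg R g j := by
  intro S hS
  simp only [Fop, LinearMap.coe_mk, AddHom.coe_mk]
  refine Finset.sum_eq_zero fun i hi => hf _ ?_
  obtain ⟨ha, hb⟩ := (Finset.mem_filter.mp hi).2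
  rw [Finset.card_insert_of_notMem (by simp [ai_ne_bi, ha]), Finset.card_insert_of_notMem hb]
  omega

def symplecticForm : Lam R g :=
  fun S => if ∃ i : Fin g, S = pairSet g i then 1 else 0

lemma symplecticForm_mem_Ldeg_two : symplecticForm R g ∈ Ldeg R g 2 := by
  rintro S hS
  rw [symplecticForm, if_neg]
  rintro ⟨i, rfl⟩
  exact hS (card_pairSet g i)

lemma symplecticForm_pairSet (i : Fin g) : symplecticForm R g (pairSet g i) = 1 :=
  if_pos ⟨i, rfl⟩

lemma Fop_symplecticForm : Fop R g (symplecticForm R g) = Pi.single ∅ (g : R) := by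
  funext S
  rcases eq_or_ne S ∅ with rfl | hS
  · simp [Fop_apply_empty, symplecticForm_pairSet]
  · rw [Pi.single_eq_of_ne hS]
    exact Fop_mem_Ldeg R g (symplecticForm_mem_Ldeg_two R g) S (by simpa using hS)

lemma innerF_symplecticForm (w : Lam R g) :
    innerF R g (symplecticForm R g) w = Fop R g w ∅ := by
  have hsupp : Finset.univ.filter (fun S => ∃ i : Fin g, S = pairSet g i) =
      Finset.univ.image (pairSet g) := by
    ext S; simp [eq_comm]
  simp only [innerF, symplecticForm, ite_mul, one_mul, zero_mul]
  rw [← Finset.sum_filter, hsupp, Finset.sum_image fun i _ j _ h => pairSet_injective g h,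
    Fop_apply_empty]

lemma symplecticForm_ne_zero [Nontrivial R] (hg : 0 < g) : symplecticForm R g ≠ 0 := by
  intro h
  simpa [h] using symplecticForm_pairSet R g ⟨0, hg⟩

end Symplectic

theorem inner_form_degenerate_mod_p_general (p : ℕ) (hp : p.Prime) :
    Fop (ZMod p) p (omegaModP p) = 0 ∧
    omegaModP p ∈ Ldeg (ZMod p) p 2 ∧
    omegaModP p ≠ 0 ∧
    (∀ w : Lam (ZMod p) p, Fop (ZMod p) p w = 0 → w ∈ Ldeg (ZMod p) p 2 →
      innerF (ZMod p) p (omegaModP p) w = 0) := by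
  have : Fact p.Prime := ⟨hp⟩
  have hv : omegaModP p = symplecticForm (ZMod p) p := rfl
  refine ⟨?_, symplecticForm_mem_Ldeg_two _ _, symplecticForm_ne_zero _ _ hp.pos, ?_⟩
  · rw [hv, Fop_symplecticForm, ZMod.natCast_self, Pi.single_zero]
  · intro w hw _
    rw [hv, innerF_symplecticForm, hw, Pi.zero_apply]

theorem inner_form_degenerate_mod_p (p : ℕ) (hp : p.Prime) (hp3 : 3 ≤ p) :
    Fop (ZMod p) p (omegaModP p) = 0 ∧
    omegaModP p ∈ Ldeg (ZMod p) p 2 ∧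
    omegaModP p ≠ 0 ∧
    (∀ w : Lam (ZMod p) p, Fop (ZMod p) p w = 0 → w ∈ Ldeg (ZMod p) p 2 →
      innerF (ZMod p) p (omegaModP p) w = 0) :=
  inner_form_degenerate_mod_p_general p hp
end

section
/- Let p be an odd prime and E the operator of wedging with ω on Λ*(Z^{2g}) (g arbitrary, ω the standard symplectic 2-form). If j ≡ k mod p with 0 < k < p, then E^k maps the integral primitive subspace of the j-th Lefschetz component into the sum of the primitive subspace of the (j-2k)-th component and p·Λ*(Z^{2g}); consequently E^k induces a well-defined map between the mod-p reductions of these subspaces. Moreover E^p ≡ 0 mod p as an operator from ker(F)∩Λ^{g-j+1} when j is the weight, i.e., E^p maps primitive vectors into p·Λ*(Z^{2g}). -/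
/-!
`E` and `F` satisfy `[F, E] = g - deg`, so for primitive `f` of degree `d = g + 1 - j` one gets
`F (E^{m+1} f) = (m + 1)(j - 1 - m) E^m f`. Hence for `1 ≤ a ≤ k` the vector `F^a E^k f` is a
multiple of `k (j - k) ≡ 0 (mod p)`; since `a!` is prime to `p`, the divided power
`F^a E^k f / a!` is divisible by `p` as well. For `a > k` it vanishes. Thus every divided power
of `F` kills `E^k f` modulo `p`.

Such a vector is congruent to an integral primitive one. Splitting a monomial `S` into its full
pairs and the remaining set `ρ`, a homogeneous vector becomes, for each `ρ`, a function on the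
`r`-subsets of the pairs free in `ρ`; there `F` sums over one-element extensions, the divided
powers of `F` become upper sums over intervals, and the polytabloids `∏ (e_a - e_b)` over
matchings are primitive. A straightening induction on the ground set shows that a function
whose upper sums below rank `r` vanish modulo `q` is congruent modulo `q` to an integral
combination of polytabloids.

Finally `E^p = p! E^{(p)}` with the integral divided power `E^{(p)}`.
-/

namespace Finset

open scoped symmDiff

variable {ι : Type} [DecidableEq ι]

lemma card_inter_pair {a b : ι} (hab : a ≠ b) (B : Finset ι) :
    (B ∩ {a, b}).card = (if a ∈ B then 1 else 0) + (if b ∈ B then 1 else 0) := by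
  rw [inter_comm, ← filter_mem_eq_inter, card_filter, sum_pair hab]

lemma sum_sum_powersetCard_erase {M : Type} [AddCommMonoid M]
    (u : Finset ι) (a : ℕ) (F : Finset ι → M) :
    ∑ i ∈ u, ∑ I ∈ (u.erase i).powersetCard a, F (insert i I) =
      (a + 1) • ∑ J ∈ u.powersetCard (a + 1), F J := by
  have hinner : ∀ i ∈ u, ∑ I ∈ (u.erase i).powersetCard a, F (insert i I) =
      ∑ J ∈ (u.powersetCard (a + 1)).filter (i ∈ ·), F J := fun i hi => by
    refine sum_nbij' (insert i) (·.erase i) (fun I hI => ?_) (fun J hJ => ?_)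
      (fun I hI => ?_) (fun J hJ => ?_) fun _ _ => rfl
    · have hiI : i ∉ I := fun h => by simpa using (mem_powersetCard.1 hI).1 h
      simp only [mem_powersetCard, mem_filter] at hI ⊢
      exact ⟨⟨insert_subset hi (hI.1.trans (erase_subset i u)),
        by rw [card_insert_of_notMem hiI, hI.2]⟩, mem_insert_self i I⟩
    · simp only [mem_powersetCard, mem_filter] at hJ ⊢
      exact ⟨erase_subset_erase i hJ.1.1, by rw [card_erase_of_mem hJ.2, hJ.1.2]; rfl⟩
    · have hiI : i ∉ I := fun h => by simpa using (mem_powersetCard.1 hI).1 h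
      exact erase_insert hiI
    · exact insert_erase (mem_filter.1 hJ).2
  rw [sum_congr rfl hinner, sum_comm' (t' := u.powersetCard (a + 1)) (s' := id)]
  · rw [smul_sum]
    refine sum_congr rfl fun J hJ => ?_
    rw [id, sum_const, (mem_powersetCard.1 hJ).2]
  · intro i J
    simp only [mem_filter, mem_powersetCard, id]
    exact ⟨fun h => ⟨h.2.2, h.2.1⟩, fun h => ⟨h.2.1 h.1, h.2, h.1⟩⟩

lemma symmDiff_subset_iff {B P V : Finset ι} (hP : P ⊆ V) : B ∆ P ⊆ V ↔ B ⊆ V :=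
  ⟨fun h => (le_symmDiff_sup_right B P).trans (sup_le h hP),
    fun h => symmDiff_le_sup.trans (sup_le h hP)⟩

lemma union_symmDiff_of_disjoint {G T P : Finset ι} (h : Disjoint G P) :
    G ∪ T ∆ P = (G ∪ T) ∆ P := by
  ext x
  have : x ∈ G → x ∉ P := fun hx => disjoint_left.1 h hx
  simp only [mem_union, mem_symmDiff]
  tauto

end Finset

namespace Straighten

open Finset Submodule
open scoped symmDiff

variable {ι : Type}

def onSlice (U : Finset ι) (r : ℕ) : Submodule ℤ (Finset ι → ℤ) where
  carrier := {w | ∀ B, w B ≠ 0 → B ⊆ U ∧ B.card = r}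
  add_mem' {w w'} hw hw' B hB := by
    by_cases h : w B = 0
    · exact hw' B (by simpa [h] using hB)
    · exact hw B h
  zero_mem' B hB := absurd rfl hB
  smul_mem' c w hw B hB := hw B (right_ne_zero_of_mul hB)

lemma apply_eq_zero_of_mem_onSlice {U : Finset ι} {r : ℕ} {w : Finset ι → ℤ}
    (hw : w ∈ onSlice U r) {B : Finset ι} (hB : ¬(B ⊆ U ∧ B.card = r)) : w B = 0 :=
  not_not.1 (mt (hw B) hB)

variable [DecidableEq ι]

def upperSum (U : Finset ι) (w : Finset ι → ℤ) (G : Finset ι) : ℤ :=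
  ∑ T ∈ (U \ G).powerset, w (G ∪ T)

lemma upperSum_eq_sum_powersetCard {U : Finset ι} {r : ℕ} {w : Finset ι → ℤ}
    (hw : w ∈ onSlice U r) (G : Finset ι) :
    upperSum U w G = ∑ T ∈ (U \ G).powersetCard (r - G.card), w (G ∪ T) := by
  refine (sum_subset (fun T hT => mem_powerset.2 (mem_powersetCard.1 hT).1) fun T hT hTr => ?_).symm
  refine apply_eq_zero_of_mem_onSlice hw fun hB => hTr ?_
  have hcard := hB.2
  have hdisj : Disjoint G T := disjoint_of_subset_right (mem_powerset.1 hT) disjoint_sdiff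
  rw [card_union_of_disjoint hdisj] at hcard
  exact mem_powersetCard.2 ⟨mem_powerset.1 hT, by omega⟩

lemma upperSum_eq_self {U : Finset ι} {r : ℕ} {w : Finset ι → ℤ} (hw : w ∈ onSlice U r)
    {B : Finset ι} (hB : B.card = r) : upperSum U w B = w B := by
  simp [upperSum_eq_sum_powersetCard hw, hB]

lemma upperSum_eq_sum_insert {U : Finset ι} {r : ℕ} {w : Finset ι → ℤ}
    (hw : w ∈ onSlice U r) {B : Finset ι} (hB : B.card + 1 = r) :
    upperSum U w B = ∑ i ∈ U \ B, w (insert i B) := by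
  rw [upperSum_eq_sum_powersetCard hw, show r - B.card = 1 by omega, powersetCard_one, sum_map]
  simp [union_comm B]

def deletion (m : ι) (w : Finset ι → ℤ) (B : Finset ι) : ℤ :=
  if m ∈ B then 0 else w B

def link (m : ι) (w : Finset ι → ℤ) (B : Finset ι) : ℤ :=
  if m ∈ B then 0 else w (insert m B)

lemma deletion_mem_onSlice {U : Finset ι} {r : ℕ} {w : Finset ι → ℤ} (m : ι)
    (hw : w ∈ onSlice U r) : deletion m w ∈ onSlice (U.erase m) r := by
  intro B hB
  by_cases hm : m ∈ B
  · simp [deletion, hm] at hB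
  · simp only [deletion, hm, if_false] at hB
    exact ⟨subset_erase.2 ⟨(hw B hB).1, hm⟩, (hw B hB).2⟩

lemma link_mem_onSlice {U : Finset ι} {r : ℕ} {w : Finset ι → ℤ} (m : ι)
    (hw : w ∈ onSlice U r) : link m w ∈ onSlice (U.erase m) (r - 1) := by
  intro B hB
  by_cases hm : m ∈ B
  · simp [link, hm] at hB
  · simp only [link, hm, if_false] at hB
    obtain ⟨hsub, hcard⟩ := hw _ hB
    rw [card_insert_of_notMem hm] at hcard
    exact ⟨subset_erase.2 ⟨(insert_subset_iff.1 hsub).2, hm⟩, by omega⟩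

lemma upperSum_link {U G : Finset ι} {m : ι} (w : Finset ι → ℤ) (hG : G ⊆ U.erase m) :
    upperSum (U.erase m) (link m w) G = upperSum U w (insert m G) := by
  have hmG : m ∉ G := fun h => (mem_erase.1 (hG h)).1 rfl
  rw [upperSum, upperSum, sdiff_insert, erase_sdiff_comm]
  refine sum_congr rfl fun T hT => ?_
  have hmT : m ∉ G ∪ T := by
    simp only [mem_union, not_or]
    exact ⟨hmG, fun h => (mem_erase.1 (mem_powerset.1 hT h)).1 rfl⟩
  simp [link, hmT, insert_union]

lemma upperSum_eq_deletion_add_link {U G : Finset ι} {m : ι} (w : Finset ι → ℤ)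
    (hm : m ∈ U) (hG : G ⊆ U.erase m) :
    upperSum U w G = upperSum (U.erase m) (deletion m w) G + upperSum (U.erase m) (link m w) G := by
  have hmG : m ∉ G := fun h => (mem_erase.1 (hG h)).1 rfl
  have hmd : m ∉ U.erase m \ G := fun h => (mem_erase.1 (mem_sdiff.1 h).1).1 rfl
  have hUG : U \ G = insert m (U.erase m \ G) := by
    rw [erase_sdiff_comm, insert_erase (mem_sdiff.2 ⟨hm, hmG⟩)]
  rw [upperSum, hUG, sum_powerset_insert hmd]
  congr 1 <;> refine sum_congr rfl fun T hT => ?_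
  all_goals
    have hmT : m ∉ G ∪ T := by
      simp only [mem_union, not_or]
      exact ⟨hmG, fun h => hmd (mem_powerset.1 hT h)⟩
  · simp [deletion, hmT]
  · simp [link, hmT, union_insert]

lemma dvd_of_dvd_of_dvd_insert {q : ℤ} {w : Finset ι → ℤ} (m : ι)
    (h0 : ∀ B, m ∉ B → q ∣ w B) (h1 : ∀ B, m ∉ B → q ∣ w (insert m B))
    (B : Finset ι) :
    q ∣ w B := by
  by_cases hm : m ∈ B
  · simpa [insert_erase hm] using h1 (B.erase m) (notMem_erase m B)
  · exact h0 B hm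

lemma dvd_upperSum_of_forall_dvd {q : ℤ} {w : Finset ι → ℤ} (h : ∀ B, q ∣ w B)
    (U G : Finset ι) : q ∣ upperSum U w G :=
  dvd_sum fun _ _ => h _

/-- Induction on `U`: the deletion of `m ∈ U` satisfies the hypothesis for `N + 1`, and then the
link of `m` satisfies it for `N - 1`; for `N = 0` the hypothesis at `B` itself is the claim. -/
theorem dvd_of_dvd_upperSum_of_card_add_le (q : ℤ) (U : Finset ι) :
    ∀ (r N : ℕ) (w : Finset ι → ℤ), w ∈ onSlice U r → U.card + N ≤ 2 * r →
      (∀ G ⊆ U, G.card + N ≤ r → q ∣ upperSum U w G) → ∀ B, q ∣ w B := by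
  induction U using Finset.strongInduction with
  | _ U ih =>
  intro r N w hw hUN hsh B
  by_cases hw0 : w B = 0
  · simp [hw0]
  obtain ⟨hBU, hBr⟩ := hw B hw0
  rcases Nat.eq_zero_or_pos N with rfl | hN
  · simpa [upperSum_eq_self hw hBr] using hsh B hBU (by omega)
  obtain ⟨m, hm⟩ : U.Nonempty := (card_pos.1 (show 0 < B.card by omega)).mono hBU
  have hcard : (U.erase m).card + 1 = U.card := card_erase_add_one hm
  have hdel : ∀ B, q ∣ deletion m w B := by
    refine ih _ (erase_ssubset hm) r (N + 1) _ (deletion_mem_onSlice m hw) (by omega)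
      fun G hG hGr => ?_
    have hmG : m ∉ G := fun h => (mem_erase.1 (hG h)).1 rfl
    have hsplit := upperSum_eq_deletion_add_link w hm hG
    rw [upperSum_link w hG] at hsplit
    rw [eq_sub_of_add_eq hsplit.symm]
    refine dvd_sub (hsh G (hG.trans (erase_subset m U)) (by omega))
      (hsh _ (insert_subset hm (hG.trans (erase_subset m U))) ?_)
    rw [card_insert_of_notMem hmG]
    omega
  have hlink : ∀ B, q ∣ link m w B := by
    refine ih _ (erase_ssubset hm) (r - 1) (N - 1) _ (link_mem_onSlice m hw) (by omega)
      fun G hG hGr => ?_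
    rw [eq_sub_of_add_eq' (upperSum_eq_deletion_add_link w hm hG).symm]
    exact dvd_sub (hsh G (hG.trans (erase_subset m U)) (by omega))
      (dvd_upperSum_of_forall_dvd hdel _ _)
  refine dvd_of_dvd_of_dvd_insert m (fun B hB => ?_) (fun B hB => ?_) B
  · simpa [deletion, hB] using hdel B
  · simpa [link, hB] using hlink B

def edge (z : ι × ι) : Finset ι := {z.1, z.2}

def verts (M : Finset (ι × ι)) : Finset ι := M.biUnion edge

def IsMatchingOn (U : Finset ι) (M : Finset (ι × ι)) : Prop :=
  (∀ z ∈ M, z.1 ∈ U ∧ z.2 ∈ U ∧ z.1 ≠ z.2) ∧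
    (M : Set (ι × ι)).PairwiseDisjoint edge

def edgeSign (z : ι × ι) (B : Finset ι) : ℤ :=
  (if z.1 ∈ B then 1 else 0) - (if z.2 ∈ B then 1 else 0)

/-- The coefficient of `∏ B` in the multilinear polynomial `∏_{(a, b) ∈ M} (x_a - x_b)`. -/
def polytabloid (M : Finset (ι × ι)) (B : Finset ι) : ℤ :=
  if B ⊆ verts M then ∏ z ∈ M, edgeSign z B else 0

def polytabloids (U : Finset ι) (r : ℕ) : Set (Finset ι → ℤ) :=
  {w | ∃ M, IsMatchingOn U M ∧ M.card = r ∧ w = polytabloid M}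

lemma edge_subset_verts {M : Finset (ι × ι)} {z : ι × ι} (hz : z ∈ M) :
    edge z ⊆ verts M :=
  subset_biUnion_of_mem edge hz

namespace IsMatchingOn

variable {U : Finset ι} {M : Finset (ι × ι)}

lemma edge_subset (hM : IsMatchingOn U M) {z : ι × ι} (hz : z ∈ M) : edge z ⊆ U := by
  simp [edge, insert_subset_iff, (hM.1 z hz).1, (hM.1 z hz).2.1]

lemma verts_subset (hM : IsMatchingOn U M) : verts M ⊆ U :=
  biUnion_subset.2 fun _ hz => hM.edge_subset hz

lemma card_edge (hM : IsMatchingOn U M) {z : ι × ι} (hz : z ∈ M) : (edge z).card = 2 :=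
  card_pair (hM.1 z hz).2.2

lemma card_verts (hM : IsMatchingOn U M) : (verts M).card = 2 * M.card := by
  rw [verts, card_biUnion hM.2, sum_congr rfl fun _ hz => hM.card_edge hz, sum_const,
    smul_eq_mul, mul_comm]

lemma mono (hM : IsMatchingOn U M) {V : Finset ι} (hUV : U ⊆ V) : IsMatchingOn V M :=
  ⟨fun z hz => ⟨hUV (hM.1 z hz).1, hUV (hM.1 z hz).2.1, (hM.1 z hz).2.2⟩, hM.2⟩

lemma insert (hM : IsMatchingOn U M) {a b : ι} (ha : a ∈ U) (hb : b ∈ U) (hab : a ≠ b)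
    (hdisj : Disjoint (edge (a, b)) (verts M)) : IsMatchingOn U (Insert.insert (a, b) M) := by
  refine ⟨fun z hz => ?_, ?_⟩
  · rcases mem_insert.1 hz with rfl | hz
    exacts [⟨ha, hb, hab⟩, hM.1 z hz]
  · rw [coe_insert]
    exact hM.2.insert fun z hz _ => hdisj.mono_right (edge_subset_verts hz)

lemma exists_disjoint_edge (hM : IsMatchingOn U M) {G : Finset ι} (hG : G.card < M.card) :
    ∃ z ∈ M, Disjoint (edge z) G := by
  by_contra! hmeet
  have hle : M.card ≤ (M.biUnion fun z => edge z ∩ G).card :=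
    card_le_card_biUnion (hM.2.mono fun _ => inter_subset_left)
      fun z hz => not_disjoint_iff_nonempty_inter.1 (hmeet z hz)
  exact hG.not_ge (hle.trans (card_le_card (biUnion_subset.2 fun _ _ => inter_subset_right)))

end IsMatchingOn

lemma card_inter_edge_of_edgeSign_ne_zero {z : ι × ι} {B : Finset ι} (h : edgeSign z B ≠ 0) :
    (B ∩ edge z).card = 1 := by
  have hne : z.1 ≠ z.2 := fun he => h (by simp [edgeSign, he])
  rw [edge, card_inter_pair hne]
  simp only [edgeSign] at h
  split_ifs at h ⊢ <;> simp_all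

lemma polytabloid_mem_onSlice {U : Finset ι} {M : Finset (ι × ι)} (hM : IsMatchingOn U M) :
    polytabloid M ∈ onSlice U M.card := by
  intro B hB
  by_cases hBM : B ⊆ verts M
  swap
  · simp [polytabloid, hBM] at hB
  rw [polytabloid, if_pos hBM] at hB
  have hB' : B = M.biUnion fun z => B ∩ edge z := by
    rw [← inter_biUnion, ← verts, inter_eq_left.2 hBM]
  refine ⟨hBM.trans hM.verts_subset, ?_⟩
  rw [hB', card_biUnion (hM.2.mono fun _ => inter_subset_right)]
  exact (sum_congr rfl fun z hz =>
    card_inter_edge_of_edgeSign_ne_zero fun h0 => hB (prod_eq_zero hz h0)).trans (by simp)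

lemma edgeSign_symmDiff_self {z : ι × ι} (hz : z.1 ≠ z.2) (B : Finset ι) :
    edgeSign z (B ∆ edge z) = -edgeSign z B := by
  simp only [edgeSign, edge, mem_symmDiff, mem_insert, mem_singleton, hz, hz.symm]
  split_ifs <;> simp_all

lemma edgeSign_symmDiff_of_disjoint {z : ι × ι} {P : Finset ι} (hP : Disjoint (edge z) P)
    (B : Finset ι) : edgeSign z (B ∆ P) = edgeSign z B := by
  have h1 : z.1 ∉ P := disjoint_left.1 hP (by simp [edge])
  have h2 : z.2 ∉ P := disjoint_left.1 hP (by simp [edge])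
  simp [edgeSign, mem_symmDiff, h1, h2]

lemma polytabloid_symmDiff_edge {U : Finset ι} {M : Finset (ι × ι)} (hM : IsMatchingOn U M)
    {z : ι × ι} (hz : z ∈ M) (B : Finset ι) :
    polytabloid M (B ∆ edge z) = -polytabloid M B := by
  unfold polytabloid
  by_cases hB : B ⊆ verts M
  · rw [if_pos ((symmDiff_subset_iff (edge_subset_verts hz)).2 hB), if_pos hB,
      ← mul_prod_erase M _ hz, ← mul_prod_erase M _ hz, edgeSign_symmDiff_self (hM.1 z hz).2.2,
      prod_congr rfl fun z' hz' => edgeSign_symmDiff_of_disjoint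
        (hM.2 (mem_erase.1 hz').2 hz (mem_erase.1 hz').1) B, neg_mul]
  · rw [if_neg (mt (symmDiff_subset_iff (edge_subset_verts hz)).1 hB), if_neg hB, neg_zero]

lemma upperSum_polytabloid {U : Finset ι} {M : Finset (ι × ι)} (hM : IsMatchingOn U M)
    {G : Finset ι} (hG : G.card < M.card) : upperSum U (polytabloid M) G = 0 := by
  obtain ⟨z, hz, hzG⟩ := hM.exists_disjoint_edge hG
  have hzUG : edge z ⊆ U \ G := subset_sdiff.2 ⟨hM.edge_subset hz, hzG⟩
  refine sum_involution (fun T _ => T ∆ edge z) (fun T _ => ?_) (fun T _ _ hT => ?_)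
    (fun T hT => ?_) fun T _ => symmDiff_symmDiff_cancel_right _ _
  · rw [union_symmDiff_of_disjoint hzG.symm, polytabloid_symmDiff_edge hM hz, add_neg_cancel]
  · exact insert_ne_empty _ _ (symmDiff_eq_left.1 hT)
  · exact mem_powerset.2 ((symmDiff_subset_iff hzUG).2 (mem_powerset.1 hT))

lemma polytabloids_mono {U V : Finset ι} (hUV : U ⊆ V) (r : ℕ) :
    polytabloids U r ⊆ polytabloids V r := by
  rintro _ ⟨M, hM, hMr, rfl⟩
  exact ⟨M, hM.mono hUV, hMr, rfl⟩

lemma span_polytabloids_le_onSlice (U : Finset ι) (r : ℕ) :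
    span ℤ (polytabloids U r) ≤ onSlice U r :=
  span_le.2 fun _ ⟨_, hM, hMr, hw⟩ => hw ▸ hMr ▸ polytabloid_mem_onSlice hM

lemma upperSum_add (U : Finset ι) (w w' : Finset ι → ℤ) (G : Finset ι) :
    upperSum U (w + w') G = upperSum U w G + upperSum U w' G :=
  sum_add_distrib

lemma upperSum_smul (U : Finset ι) (c : ℤ) (w : Finset ι → ℤ) (G : Finset ι) :
    upperSum U (c • w) G = c * upperSum U w G := by
  simp [upperSum, mul_sum]

lemma upperSum_eq_zero_of_mem_span {U : Finset ι} {r : ℕ} {u : Finset ι → ℤ}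
    (hu : u ∈ span ℤ (polytabloids U r)) {G : Finset ι} (hG : G.card < r) :
    upperSum U u G = 0 := by
  induction hu using span_induction with
  | mem _ hw =>
    obtain ⟨M, hM, rfl, rfl⟩ := hw
    exact upperSum_polytabloid hM hG
  | zero => simp [upperSum]
  | add _ _ _ _ h h' => rw [upperSum_add, h, h', add_zero]
  | smul c _ _ h => rw [upperSum_smul, h, mul_zero]

lemma sum_insert_eq_zero_of_mem_span {U : Finset ι} {r : ℕ} {u : Finset ι → ℤ}
    (hu : u ∈ span ℤ (polytabloids U r)) (B : Finset ι) :
    ∑ i ∈ U \ B, u (insert i B) = 0 := by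
  have hslice := span_polytabloids_le_onSlice U r hu
  by_cases hB : B.card + 1 = r
  · rw [← upperSum_eq_sum_insert hslice hB, upperSum_eq_zero_of_mem_span hu (by omega)]
  · refine sum_eq_zero fun i hi => apply_eq_zero_of_mem_onSlice hslice fun h => hB ?_
    rw [← h.2, card_insert_of_notMem (mem_sdiff.1 hi).2]

lemma polytabloid_insert_apply_insert {M : Finset (ι × ι)} {a b : ι} (hab : a ≠ b)
    (hdisj : Disjoint (edge (a, b)) (verts M)) {B : Finset ι} (hbB : b ∉ B) :
    polytabloid (insert (a, b) M) (insert b B) = -polytabloid M B := by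
  have ha : a ∉ verts M := disjoint_left.1 hdisj (by simp [edge])
  have hb : b ∉ verts M := disjoint_left.1 hdisj (by simp [edge])
  have haM : (a, b) ∉ M := fun h => ha (edge_subset_verts h (by simp [edge]))
  have hverts : verts (insert (a, b) M) = insert a (insert b (verts M)) := by
    simp [verts, biUnion_insert, edge, insert_union]
  by_cases haB : a ∈ B
  · have hsign : edgeSign (a, b) (insert b B) = 0 := by simp [edgeSign, haB]
    simp only [polytabloid, prod_insert haM, hsign, zero_mul, ite_self, zero_eq_neg,
      ite_eq_right_iff]
    exact fun h => absurd (h haB) ha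
  have hsub : insert b B ⊆ insert a (insert b (verts M)) ↔ B ⊆ verts M := by
    simp only [insert_subset_iff, mem_insert, true_or, or_true, true_and]
    exact ⟨fun h x hx => by grind,
      fun h => h.trans ((subset_insert _ _).trans (subset_insert _ _))⟩
  have hsign : edgeSign (a, b) (insert b B) = -1 := by simp [edgeSign, haB, hab]
  have hrest : ∀ z ∈ M, edgeSign z (insert b B) = edgeSign z B := fun z hz => by
    have h1 : z.1 ≠ b := fun h => hb (edge_subset_verts hz (by simp [edge, h]))
    have h2 : z.2 ≠ b := fun h => hb (edge_subset_verts hz (by simp [edge, h]))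
    simp [edgeSign, h1, h2]
  rw [polytabloid, polytabloid, hverts]
  by_cases hB : B ⊆ verts M
  · rw [if_pos (hsub.2 hB), if_pos hB, prod_insert haM, hsign, prod_congr rfl hrest, neg_one_mul]
  · rw [if_neg (mt hsub.1 hB), if_neg hB, neg_zero]

lemma exists_lift_polytabloid {U : Finset ι} {m : ι} (hm : m ∉ U) {r : ℕ}
    (hr : 2 * r < U.card) {w : Finset ι → ℤ} (hw : w ∈ polytabloids U r) :
    ∃ Ξ ∈ polytabloids (insert m U) (r + 1), ∀ B, m ∉ B → Ξ (insert m B) = -w B := by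
  obtain ⟨M, hM, rfl, rfl⟩ := hw
  obtain ⟨a, ha⟩ : (U \ verts M).Nonempty := by
    rw [← card_pos, card_sdiff_of_subset hM.verts_subset, hM.card_verts]
    omega
  obtain ⟨haU, haM⟩ := mem_sdiff.1 ha
  have ham : a ≠ m := fun h => hm (h ▸ haU)
  have hdisj : Disjoint (edge (a, m)) (verts M) := by
    simpa [edge, haM] using fun h => hm (hM.verts_subset h)
  refine ⟨polytabloid (insert (a, m) M),
    ⟨_, (hM.mono (subset_insert m U)).insert (mem_insert_of_mem haU) (mem_insert_self m U) ham
      hdisj, ?_, rfl⟩, fun B hB => polytabloid_insert_apply_insert ham hdisj hB⟩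
  exact card_insert_of_notMem fun h => haM (edge_subset_verts h (by simp [edge]))

lemma exists_lift_of_mem_span {U : Finset ι} {m : ι} (hm : m ∉ U) {r : ℕ}
    (hr : 2 * r < U.card) {u : Finset ι → ℤ} (hu : u ∈ span ℤ (polytabloids U r)) :
    ∃ Ξ ∈ span ℤ (polytabloids (insert m U) (r + 1)),
      ∀ B, m ∉ B → Ξ (insert m B) = -u B := by
  induction hu using span_induction with
  | mem _ hw =>
    obtain ⟨Ξ, hΞ, hlift⟩ := exists_lift_polytabloid hm hr hw
    exact ⟨Ξ, subset_span hΞ, hlift⟩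
  | zero => exact ⟨0, zero_mem _, fun _ _ => by simp⟩
  | add _ _ _ _ h h' =>
    obtain ⟨Ξ, hΞ, hlift⟩ := h
    obtain ⟨Ξ', hΞ', hlift'⟩ := h'
    exact ⟨Ξ + Ξ', add_mem hΞ hΞ', fun B hB => by simp [hlift B hB, hlift' B hB, add_comm]⟩
  | smul c _ _ h =>
    obtain ⟨Ξ, hΞ, hlift⟩ := h
    exact ⟨c • Ξ, smul_mem _ c hΞ, fun B hB => by simp [hlift B hB]⟩

lemma dvd_upperSum_deletion {q : ℤ} {U G : Finset ι} {m : ι} (hm : m ∈ U)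
    (hG : G ⊆ U.erase m) {v : Finset ι → ℤ} (hv : q ∣ upperSum U v G)
    (hlink : ∀ B, m ∉ B → q ∣ v (insert m B)) :
    q ∣ upperSum (U.erase m) (deletion m v) G := by
  rw [eq_sub_of_add_eq (upperSum_eq_deletion_add_link v hm hG).symm]
  refine dvd_sub hv (dvd_upperSum_of_forall_dvd (fun B => ?_) _ _)
  by_cases hB : m ∈ B
  · simp [link, hB]
  · simpa [link, hB] using hlink B hB

/-- Peel off the sets containing `m`: their part is the link of `m`, straightened on `U \ {m}`
and lifted back by adjoining `m` to a pair of each matching; what is left avoids `m`. -/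
lemma exists_mem_span_dvd_sub_succ {q : ℤ} {U : Finset ι} {m : ι} (hm : m ∈ U) {r : ℕ}
    (hr : 2 * (r + 1) ≤ U.card)
    (ih : ∀ (r : ℕ) (w : Finset ι → ℤ), w ∈ onSlice (U.erase m) r →
      (∀ G ⊆ U.erase m, G.card < r → q ∣ upperSum (U.erase m) w G) →
      ∃ u ∈ span ℤ (polytabloids (U.erase m) r), ∀ B, q ∣ w B - u B)
    {w : Finset ι → ℤ} (hw : w ∈ onSlice U (r + 1))
    (hsh : ∀ G ⊆ U, G.card < r + 1 → q ∣ upperSum U w G) :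
    ∃ u ∈ span ℤ (polytabloids U (r + 1)), ∀ B, q ∣ w B - u B := by
  have hGU : ∀ {G}, G ⊆ U.erase m → G ⊆ U := fun hG => hG.trans (erase_subset m U)
  obtain ⟨u₁, hu₁, hwu₁⟩ := ih r (link m w) (by simpa using link_mem_onSlice m hw)
    fun G hG hGr => by
      have hmG : m ∉ G := fun h => (mem_erase.1 (hG h)).1 rfl
      rw [upperSum_link w hG]
      exact hsh _ (insert_subset hm (hGU hG)) (by rw [card_insert_of_notMem hmG]; omega)
  obtain ⟨Ξ, hΞ, hΞu₁⟩ := exists_lift_of_mem_span (notMem_erase m U)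
    (by rw [card_erase_of_mem hm]; omega) hu₁
  rw [insert_erase hm] at hΞ
  have hlink : ∀ B, m ∉ B → q ∣ (w + Ξ) (insert m B) := fun B hB => by
    simpa [link, hB, hΞu₁ B hB, sub_eq_add_neg] using hwu₁ B
  obtain ⟨u₀, hu₀, hwu₀⟩ := ih (r + 1) (deletion m (w + Ξ))
    (deletion_mem_onSlice m (add_mem hw (span_polytabloids_le_onSlice U _ hΞ))) fun G hG hGr =>
      dvd_upperSum_deletion hm hG (by
        rw [upperSum_add, upperSum_eq_zero_of_mem_span hΞ hGr, add_zero]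
        exact hsh G (hGU hG) hGr) hlink
  refine ⟨u₀ - Ξ, sub_mem (span_mono (polytabloids_mono (erase_subset m U) _) hu₀) hΞ,
    dvd_of_dvd_of_dvd_insert m (fun B hB => ?_) fun B hB => ?_⟩
  · simpa [deletion, hB, sub_sub_eq_add_sub, add_sub_right_comm] using hwu₀ B
  · have hu₀m : u₀ (insert m B) = 0 :=
      apply_eq_zero_of_mem_onSlice (span_polytabloids_le_onSlice _ _ hu₀)
        fun h => notMem_erase m U (h.1 (mem_insert_self m B))
    simpa [hu₀m, sub_sub_eq_add_sub] using hlink B hB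

lemma mem_span_polytabloids_of_mem_onSlice_zero {U : Finset ι} {w : Finset ι → ℤ}
    (hw : w ∈ onSlice U 0) : w ∈ span ℤ (polytabloids U 0) := by
  have hδ : polytabloid (∅ : Finset (ι × ι)) ∈ polytabloids U 0 :=
    ⟨∅, ⟨by simp, by simp⟩, rfl, rfl⟩
  convert smul_mem _ (w ∅) (subset_span hδ)
  ext B
  by_cases hB : B = ∅
  · simp [hB, polytabloid]
  · have : w B = 0 := apply_eq_zero_of_mem_onSlice hw fun h => hB (card_eq_zero.1 h.2)
    simp [this, polytabloid, verts, hB]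

theorem exists_mem_span_polytabloids_dvd_sub (q : ℤ) (U : Finset ι) :
    ∀ (r : ℕ) (w : Finset ι → ℤ), w ∈ onSlice U r →
      (∀ G ⊆ U, G.card < r → q ∣ upperSum U w G) →
      ∃ u ∈ span ℤ (polytabloids U r), ∀ B, q ∣ w B - u B := by
  induction U using Finset.strongInduction with
  | _ U ih =>
  intro r w hw hsh
  by_cases hUr : U.card < 2 * r
  · refine ⟨0, zero_mem _, fun B => ?_⟩
    simpa using dvd_of_dvd_upperSum_of_card_add_le q U r (2 * r - U.card) w hw (by omega)
      (fun G hG hGr => hsh G hG (by omega)) B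
  rcases r with _ | r
  · exact ⟨w, mem_span_polytabloids_of_mem_onSlice_zero hw, by simp⟩
  obtain ⟨m, hm⟩ : U.Nonempty := card_pos.1 (by omega)
  exact exists_mem_span_dvd_sub_succ hm (by omega) (ih _ (erase_ssubset hm)) hw hsh

end Straighten

namespace Lefschetz

open Finset Straighten

variable {g : ℕ}

def pair (i : Fin g) : Finset (Fin (2 * g)) := {ai g i, bi g i}

def pairIndex (x : Fin (2 * g)) : Fin g := ⟨x.val / 2, by omega⟩

def fullPairs (S : Finset (Fin (2 * g))) : Finset (Fin g) :=
  univ.filter fun i => ai g i ∈ S ∧ bi g i ∈ S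

def freePairs (S : Finset (Fin (2 * g))) : Finset (Fin g) :=
  univ.filter fun i => ai g i ∉ S ∧ bi g i ∉ S

def pairUnion (I : Finset (Fin g)) : Finset (Fin (2 * g)) := I.biUnion pair

@[simp] lemma mem_fullPairs {S : Finset (Fin (2 * g))} {i : Fin g} :
    i ∈ fullPairs S ↔ ai g i ∈ S ∧ bi g i ∈ S := by
  simp [fullPairs]

@[simp] lemma mem_freePairs {S : Finset (Fin (2 * g))} {i : Fin g} :
    i ∈ freePairs S ↔ ai g i ∉ S ∧ bi g i ∉ S := by
  simp [freePairs]

lemma ai_ne_bi (i l : Fin g) : ai g i ≠ bi g l := by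
  simp only [ai, bi, ne_eq, Fin.ext_iff]
  omega

lemma mem_pair {x : Fin (2 * g)} {i : Fin g} : x ∈ pair i ↔ pairIndex x = i := by
  simp only [pair, ai, bi, pairIndex, mem_insert, mem_singleton, Fin.ext_iff]
  omega

@[simp] lemma pairIndex_ai (i : Fin g) : pairIndex (ai g i) = i := mem_pair.1 (by simp [pair])

@[simp] lemma pairIndex_bi (i : Fin g) : pairIndex (bi g i) = i := mem_pair.1 (by simp [pair])

@[simp] lemma ai_mem_pair {i l : Fin g} : ai g l ∈ pair i ↔ l = i := by simp [mem_pair]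

@[simp] lemma bi_mem_pair {i l : Fin g} : bi g l ∈ pair i ↔ l = i := by simp [mem_pair]

lemma mem_pairUnion {x : Fin (2 * g)} {I : Finset (Fin g)} :
    x ∈ pairUnion I ↔ pairIndex x ∈ I := by
  simp [pairUnion, mem_pair]

@[simp] lemma ai_mem_pairUnion {l : Fin g} {I : Finset (Fin g)} :
    ai g l ∈ pairUnion I ↔ l ∈ I := by
  simp [mem_pairUnion]

@[simp] lemma bi_mem_pairUnion {l : Fin g} {I : Finset (Fin g)} :
    bi g l ∈ pairUnion I ↔ l ∈ I := by
  simp [mem_pairUnion]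

lemma card_pair (i : Fin g) : (pair i).card = 2 := Finset.card_pair (ai_ne_bi i i)

lemma pair_subset_iff {S : Finset (Fin (2 * g))} {i : Fin g} :
    pair i ⊆ S ↔ i ∈ fullPairs S := by
  simp [pair, insert_subset_iff]

lemma disjoint_pair_of_mem_freePairs {S : Finset (Fin (2 * g))} {i : Fin g}
    (hi : i ∈ freePairs S) : Disjoint (pair i) S := by
  simpa [pair] using mem_freePairs.1 hi

lemma disjoint_pairUnion_of_subset_freePairs {S : Finset (Fin (2 * g))} {I : Finset (Fin g)}
    (hI : I ⊆ freePairs S) : Disjoint (pairUnion I) S :=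
  (disjoint_biUnion_left _ _ _).2 fun _ hi => disjoint_pair_of_mem_freePairs (hI hi)

lemma card_pairUnion (I : Finset (Fin g)) : (pairUnion I).card = 2 * I.card := by
  rw [pairUnion, card_biUnion fun i _ l _ hil => disjoint_left.2 fun x hx hx' =>
    hil ((mem_pair.1 hx).symm.trans (mem_pair.1 hx'))]
  simp [card_pair, mul_comm]

lemma card_union_pairUnion {S : Finset (Fin (2 * g))} {I : Finset (Fin g)}
    (hI : I ⊆ freePairs S) : (S ∪ pairUnion I).card = S.card + 2 * I.card := by
  rw [card_union_of_disjoint (disjoint_pairUnion_of_subset_freePairs hI).symm, card_pairUnion]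

@[simp] lemma pairUnion_empty : pairUnion (∅ : Finset (Fin g)) = ∅ := biUnion_empty

lemma pairUnion_insert (i : Fin g) (I : Finset (Fin g)) :
    pairUnion (insert i I) = pair i ∪ pairUnion I :=
  biUnion_insert

lemma freePairs_union_pairUnion (S : Finset (Fin (2 * g))) (I : Finset (Fin g)) :
    freePairs (S ∪ pairUnion I) = freePairs S \ I := by
  ext l
  simp only [mem_freePairs, mem_union, ai_mem_pairUnion, bi_mem_pairUnion, mem_sdiff]
  tauto

lemma fullPairs_union_pair {S : Finset (Fin (2 * g))} {i : Fin g} (hi : i ∈ freePairs S) :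
    fullPairs (S ∪ pair i) = insert i (fullPairs S) := by
  ext l
  rw [mem_freePairs] at hi
  by_cases hl : l = i <;> simp [hl, hi]

lemma freePairs_union_pair (S : Finset (Fin (2 * g))) (i : Fin g) :
    freePairs (S ∪ pair i) = (freePairs S).erase i := by
  ext l
  by_cases hl : l = i <;> simp [hl]

lemma fullPairs_sdiff_pair (S : Finset (Fin (2 * g))) (i : Fin g) :
    fullPairs (S \ pair i) = (fullPairs S).erase i := by
  ext l
  by_cases hl : l = i <;> simp [hl]

lemma freePairs_sdiff_pair {S : Finset (Fin (2 * g))} {i : Fin g} (hi : i ∈ fullPairs S) :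
    freePairs (S \ pair i) = insert i (freePairs S) := by
  ext l
  rw [mem_fullPairs] at hi
  by_cases hl : l = i <;> simp [hl, hi]

/-- Each pair contributes `|S ∩ {a_i, b_i}| + [free] = 1 + [full]`. -/
lemma card_add_card_freePairs (S : Finset (Fin (2 * g))) :
    S.card + (freePairs S).card = g + (fullPairs S).card := by
  have hS : S.card = ∑ i, (S ∩ pair i).card := by
    rw [card_eq_sum_card_fiberwise fun x _ => mem_univ (pairIndex x)]
    exact sum_congr rfl fun i _ => congrArg card (by ext x; simp [mem_pair])
  rw [hS, freePairs, fullPairs, card_filter, card_filter, ← sum_add_distrib]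
  have hpair : ∀ i : Fin g,
      (S ∩ pair i).card + (if ai g i ∉ S ∧ bi g i ∉ S then 1 else 0) =
        1 + if ai g i ∈ S ∧ bi g i ∈ S then 1 else 0 := fun i => by
    rw [pair, card_inter_pair (ai_ne_bi i i)]
    split_ifs <;> simp_all
  rw [sum_congr rfl fun i _ => hpair i, sum_add_distrib]
  simp

variable {R : Type} [CommRing R]

lemma Eop_apply (x : Lam R g) (S : Finset (Fin (2 * g))) :
    Eop R g x S = ∑ i ∈ fullPairs S, x (S \ pair i) := rfl

lemma Fop_apply (x : Lam R g) (S : Finset (Fin (2 * g))) :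
    Fop R g x S = ∑ i ∈ freePairs S, x (S ∪ pair i) := by
  change ∑ i ∈ freePairs S, x (insert (ai g i) (insert (bi g i) S)) = _
  refine sum_congr rfl fun i _ => congrArg x ?_
  rw [pair, union_comm, insert_union, singleton_union]

lemma Eop_mem_Ldeg {d : ℕ} {x : Lam R g} (hx : x ∈ Ldeg R g d) :
    Eop R g x ∈ Ldeg R g (d + 2) := by
  intro S hS
  rw [Eop_apply]
  refine sum_eq_zero fun i hi => hx _ ?_
  have h2 := card_le_card (pair_subset_iff.2 hi)
  rw [card_sdiff_of_subset (pair_subset_iff.2 hi), card_pair] at *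
  omega

lemma Eop_pow_mem_Ldeg {d : ℕ} {x : Lam R g} (hx : x ∈ Ldeg R g d) (m : ℕ) :
    ((Eop R g) ^ m) x ∈ Ldeg R g (d + 2 * m) := by
  induction m with
  | zero => simpa using hx
  | succ m ih =>
    rw [pow_succ', Module.End.mul_apply]
    exact Eop_mem_Ldeg ih

lemma Eop_apply_union_pair {x : Lam R g} {S : Finset (Fin (2 * g))} {i : Fin g}
    (hi : i ∈ freePairs S) :
    Eop R g x (S ∪ pair i) = x S + ∑ l ∈ fullPairs S, x (S \ pair l ∪ pair i) := by
  have hi' : i ∉ fullPairs S := fun h => by simp_all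
  rw [Eop_apply, fullPairs_union_pair hi, sum_insert hi',
    union_sdiff_cancel_right (disjoint_pair_of_mem_freePairs hi).symm]
  refine congrArg _ (sum_congr rfl fun l hl => congrArg x ?_)
  have hil : Disjoint (pair i) (pair l) := disjoint_left.2 fun x hx hx' => by
    have : i = l := (mem_pair.1 hx).symm.trans (mem_pair.1 hx')
    exact hi' (this ▸ hl)
  rw [union_sdiff_distrib, sdiff_eq_self_of_disjoint hil]

lemma Fop_apply_sdiff_pair {x : Lam R g} {S : Finset (Fin (2 * g))} {l : Fin g}
    (hl : l ∈ fullPairs S) :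
    Fop R g x (S \ pair l) = x S + ∑ i ∈ freePairs S, x (S \ pair l ∪ pair i) := by
  have hl' : l ∉ freePairs S := fun h => by simp_all
  rw [Fop_apply, freePairs_sdiff_pair hl, sum_insert hl',
    sdiff_union_of_subset (pair_subset_iff.2 hl)]

lemma Fop_Eop_apply (x : Lam R g) (S : Finset (Fin (2 * g))) :
    Fop R g (Eop R g x) S = Eop R g (Fop R g x) S + ((g : R) - S.card) * x S := by
  have hcard : ((freePairs S).card : R) - (fullPairs S).card = (g : R) - S.card := by
    have h := congrArg (Nat.cast : ℕ → R) (card_add_card_freePairs S)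
    push_cast at h
    linear_combination h
  rw [Fop_apply, Eop_apply, sum_congr rfl fun i hi => Eop_apply_union_pair hi,
    sum_congr rfl fun l hl => Fop_apply_sdiff_pair hl, sum_add_distrib, sum_add_distrib,
    sum_const, sum_const, sum_comm, nsmul_eq_mul, nsmul_eq_mul]
  linear_combination x S * hcard

lemma Fop_Eop_pow_succ {d : ℕ} {f : Lam R g} (hf : f ∈ Ldeg R g d) (hprim : Fop R g f = 0)
    (m : ℕ) :
    Fop R g (((Eop R g) ^ (m + 1)) f) =
      (((m : R) + 1) * ((g : R) - d - m)) • ((Eop R g) ^ m) f := by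
  induction m with
  | zero =>
    funext S
    by_cases hS : S.card = d
    · simp [Fop_Eop_apply, hprim, hS]
    · simp [Fop_Eop_apply, hprim, hf S hS]
  | succ m ih =>
    funext S
    rw [pow_succ', Module.End.mul_apply, Fop_Eop_apply, ih, map_smul, ← Module.End.mul_apply,
      ← pow_succ']
    by_cases hS : S.card = d + 2 * (m + 1)
    · simp only [Pi.smul_apply, smul_eq_mul, hS]
      push_cast
      ring
    · simp [Eop_pow_mem_Ldeg hf (m + 1) S hS]

/-- The divided power `E^m / m!`. -/
def Ediv (m : ℕ) (x : Lam R g) : Lam R g :=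
  fun S => ∑ I ∈ (fullPairs S).powersetCard m, x (S \ pairUnion I)

/-- The divided power `F^a / a!`. -/
def Fdiv (a : ℕ) (x : Lam R g) : Lam R g :=
  fun S => ∑ I ∈ (freePairs S).powersetCard a, x (S ∪ pairUnion I)

lemma Eop_Ediv (m : ℕ) (x : Lam R g) : Eop R g (Ediv m x) = (m + 1) • Ediv (m + 1) x := by
  funext S
  rw [Eop_apply, Pi.smul_apply, Ediv, ← sum_sum_powersetCard_erase]
  refine sum_congr rfl fun i _ => ?_
  rw [Ediv, fullPairs_sdiff_pair]
  refine sum_congr rfl fun I _ => congrArg x ?_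
  rw [pairUnion_insert, sdiff_sdiff_left, sup_eq_union]

lemma Fop_Fdiv (a : ℕ) (x : Lam R g) : Fop R g (Fdiv a x) = (a + 1) • Fdiv (a + 1) x := by
  funext S
  rw [Fop_apply, Pi.smul_apply, Fdiv, ← sum_sum_powersetCard_erase]
  refine sum_congr rfl fun i _ => ?_
  rw [Fdiv, freePairs_union_pair]
  refine sum_congr rfl fun I _ => congrArg x ?_
  rw [pairUnion_insert, union_assoc]

lemma Eop_pow_apply (m : ℕ) (x : Lam R g) : ((Eop R g) ^ m) x = m.factorial • Ediv m x := by
  induction m with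
  | zero => funext S; simp [Ediv]
  | succ m ih =>
    rw [pow_succ', Module.End.mul_apply, ih, map_nsmul, Eop_Ediv, smul_smul, Nat.factorial_succ,
      Nat.mul_comm (m + 1)]

lemma Fop_pow_apply (a : ℕ) (x : Lam R g) : ((Fop R g) ^ a) x = a.factorial • Fdiv a x := by
  induction a with
  | zero => funext S; simp [Fdiv]
  | succ a ih =>
    rw [pow_succ', Module.End.mul_apply, ih, map_nsmul, Fop_Fdiv, smul_smul, Nat.factorial_succ,
      Nat.mul_comm (a + 1)]

lemma Fop_pow_Eop_pow_add {d : ℕ} {f : Lam R g} (hf : f ∈ Ldeg R g d) (hprim : Fop R g f = 0)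
    (m a : ℕ) :
    ((Fop R g) ^ a) (((Eop R g) ^ (m + a)) f) =
      (∏ i ∈ range a, ((((m + i : ℕ) : R) + 1) * ((g : R) - d - (m + i : ℕ)))) •
        ((Eop R g) ^ m) f := by
  induction a with
  | zero => simp
  | succ a ih =>
    rw [pow_succ, Module.End.mul_apply, ← add_assoc, Fop_Eop_pow_succ hf hprim, map_smul, ih,
      smul_smul, prod_range_succ, mul_comm (∏ i ∈ range a, _)]

lemma Fop_pow_Eop_pow_of_lt {d : ℕ} {f : Lam R g} (hf : f ∈ Ldeg R g d) (hprim : Fop R g f = 0)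
    {k a : ℕ} (hka : k < a) : ((Fop R g) ^ a) (((Eop R g) ^ k) f) = 0 := by
  obtain ⟨b, rfl⟩ : ∃ b, a = b + 1 + k := ⟨a - (k + 1), by omega⟩
  have := Fop_pow_Eop_pow_add hf hprim 0 k
  rw [zero_add] at this
  rw [pow_add, Module.End.mul_apply, this, pow_succ, Module.End.mul_apply, map_smul, pow_zero,
    Module.End.one_apply, hprim, smul_zero, map_zero]

/-- For `1 ≤ a ≤ k`, `F^a E^k f` is a multiple of `k (g - d - k + 1)`, and `p ∤ a!`. -/
lemma dvd_Fdiv_Eop_pow {p : ℕ} (hp : p.Prime) {d k : ℕ} (hkp : k < p) {f : Lam ℤ g}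
    (hf : f ∈ Ldeg ℤ g d) (hprim : Fop ℤ g f = 0)
    (hdvd : (p : ℤ) ∣ k * ((g : ℤ) - d - k + 1)) {a : ℕ} (ha : 1 ≤ a)
    (S : Finset (Fin (2 * g))) : (p : ℤ) ∣ Fdiv a (((Eop ℤ g) ^ k) f) S := by
  have hfact := congrFun (Fop_pow_apply a (((Eop ℤ g) ^ k) f)) S
  rw [Pi.smul_apply, nsmul_eq_mul] at hfact
  by_cases hak : a ≤ k
  swap
  · rw [Fop_pow_Eop_pow_of_lt hf hprim (by omega), Pi.zero_apply, eq_comm, mul_eq_zero] at hfact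
    exact hfact.resolve_left (by exact_mod_cast a.factorial_ne_zero) ▸ dvd_zero _
  obtain ⟨m, rfl⟩ : ∃ m, k = m + a := ⟨k - a, by omega⟩
  have hlast : (p : ℤ) ∣
      ∏ i ∈ range a, ((((m + i : ℕ) : ℤ) + 1) * ((g : ℤ) - d - (m + i : ℕ))) := by
    refine hdvd.trans ((dvd_of_eq ?_).trans
      (dvd_prod_of_mem _ (mem_range.2 (Nat.sub_lt ha one_pos))))
    push_cast [Nat.cast_sub ha]
    ring
  have hpZ : Prime (p : ℤ) := Nat.prime_iff_prime_int.1 hp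
  rw [Fop_pow_Eop_pow_add hf hprim, Pi.smul_apply, smul_eq_mul] at hfact
  refine (hpZ.dvd_mul.1 (hfact ▸ dvd_mul_of_dvd_left hlast _)).resolve_left fun h => ?_
  rw [Int.natCast_dvd_natCast, hp.dvd_factorial] at h
  omega

def unpairedPart (S : Finset (Fin (2 * g))) : Finset (Fin (2 * g)) :=
  S \ pairUnion (fullPairs S)

lemma pairUnion_fullPairs_subset (S : Finset (Fin (2 * g))) : pairUnion (fullPairs S) ⊆ S :=
  biUnion_subset.2 fun _ hi => pair_subset_iff.2 hi

lemma unpairedPart_union_pairUnion (S : Finset (Fin (2 * g))) :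
    unpairedPart S ∪ pairUnion (fullPairs S) = S :=
  sdiff_union_of_subset (pairUnion_fullPairs_subset S)

lemma fullPairs_subset_freePairs_unpairedPart (S : Finset (Fin (2 * g))) :
    fullPairs S ⊆ freePairs (unpairedPart S) := fun i hi => by
  simp [unpairedPart, hi]

lemma card_unpairedPart_add (S : Finset (Fin (2 * g))) :
    (unpairedPart S).card + 2 * (fullPairs S).card = S.card := by
  rw [← card_union_pairUnion (fullPairs_subset_freePairs_unpairedPart S),
    unpairedPart_union_pairUnion]

lemma freePairs_eq_sdiff (S : Finset (Fin (2 * g))) :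
    freePairs S = freePairs (unpairedPart S) \ fullPairs S := by
  conv_lhs => rw [← unpairedPart_union_pairUnion S]
  exact freePairs_union_pairUnion _ _

lemma unpairedPart_union_pair {S : Finset (Fin (2 * g))} {i : Fin g} (hi : i ∈ freePairs S) :
    unpairedPart (S ∪ pair i) = unpairedPart S := by
  rw [unpairedPart, unpairedPart, fullPairs_union_pair hi, pairUnion_insert]
  ext y
  have : y ∈ pair i → y ∉ S := fun h => disjoint_left.1 (disjoint_pair_of_mem_freePairs hi) h
  simp only [mem_sdiff, mem_union]
  tauto

def block (x : Lam ℤ g) (ρ : Finset (Fin (2 * g))) (B : Finset (Fin g)) : ℤ :=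
  if B ⊆ freePairs ρ then x (ρ ∪ pairUnion B) else 0

lemma block_mem_onSlice {D r : ℕ} {x : Lam ℤ g} (hx : x ∈ Ldeg ℤ g D)
    {ρ : Finset (Fin (2 * g))} (hr : ρ.card + 2 * r = D) :
    block x ρ ∈ onSlice (freePairs ρ) r := by
  intro B hB
  unfold block at hB
  split_ifs at hB with hBρ
  · refine ⟨hBρ, ?_⟩
    have := mt (hx _) hB
    rw [not_not, card_union_pairUnion hBρ] at this
    omega
  · exact absurd rfl hB

lemma upperSum_block {x : Lam ℤ g} {ρ : Finset (Fin (2 * g))} {G : Finset (Fin g)}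
    (hG : G ⊆ freePairs ρ) :
    upperSum (freePairs ρ) (block x ρ) G =
      ∑ c ∈ range ((freePairs ρ \ G).card + 1), Fdiv c x (ρ ∪ pairUnion G) := by
  rw [upperSum, sum_powerset]
  refine sum_congr rfl fun c _ => ?_
  rw [Fdiv, freePairs_union_pairUnion]
  refine sum_congr rfl fun T hT => ?_
  have hGT : G ∪ T ⊆ freePairs ρ :=
    union_subset hG ((mem_powersetCard.1 hT).1.trans sdiff_subset)
  rw [block, if_pos hGT, pairUnion, union_biUnion, union_assoc]
  rfl

lemma dvd_upperSum_block {q : ℤ} {D r : ℕ} {x : Lam ℤ g} (hx : x ∈ Ldeg ℤ g D)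
    (hdiv : ∀ a, 1 ≤ a → ∀ S, q ∣ Fdiv a x S) {ρ : Finset (Fin (2 * g))}
    (hr : ρ.card + 2 * r = D) {G : Finset (Fin g)} (hG : G ⊆ freePairs ρ) (hGr : G.card < r) :
    q ∣ upperSum (freePairs ρ) (block x ρ) G := by
  rw [upperSum_block hG, sum_range_succ']
  refine dvd_add (dvd_sum fun c _ => hdiv _ (by omega) _) ?_
  have : x (ρ ∪ pairUnion G) = 0 := hx _ (by rw [card_union_pairUnion hG]; omega)
  simp [Fdiv, this]

lemma exists_block_lift {q : ℤ} {D : ℕ} {x : Lam ℤ g} (hx : x ∈ Ldeg ℤ g D)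
    (hdiv : ∀ a, 1 ≤ a → ∀ S, q ∣ Fdiv a x S) (ρ : Finset (Fin (2 * g))) :
    ∃ v : Finset (Fin g) → ℤ, (∀ B, ρ.card + 2 * B.card ≠ D → v B = 0) ∧
      (∀ B, q ∣ block x ρ B - v B) ∧
      ∀ B, ∑ i ∈ freePairs ρ \ B, v (insert i B) = 0 := by
  by_cases hD : ∃ r, ρ.card + 2 * r = D
  · obtain ⟨r, hr⟩ := hD
    obtain ⟨v, hv, hxv⟩ := exists_mem_span_polytabloids_dvd_sub q (freePairs ρ) r (block x ρ)
      (block_mem_onSlice hx hr) fun G hG hGr => dvd_upperSum_block hx hdiv hr hG hGr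
    exact ⟨v, fun B hB => apply_eq_zero_of_mem_onSlice (span_polytabloids_le_onSlice _ _ hv)
      fun h => hB (by omega), hxv, sum_insert_eq_zero_of_mem_span hv⟩
  · refine ⟨0, fun _ _ => rfl, fun B => ?_, fun _ => by simp⟩
    have : block x ρ B = 0 := by
      unfold block
      split_ifs with hB
      · exact hx _ fun h => hD ⟨B.card, (card_union_pairUnion hB).symm.trans h⟩
      · rfl
    simp [this]

/-- Straighten every block `block x ρ` separately and reassemble along the bijection
`S ↦ (unpairedPart S, fullPairs S)`. -/
theorem exists_primitive_add_smul {q : ℤ} {D : ℕ} {x : Lam ℤ g} (hx : x ∈ Ldeg ℤ g D)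
    (hdiv : ∀ a, 1 ≤ a → ∀ S, q ∣ Fdiv a x S) :
    ∃ u w : Lam ℤ g, Fop ℤ g u = 0 ∧ u ∈ Ldeg ℤ g D ∧ x = u + q • w := by
  choose v hvD hxv hvsum using exists_block_lift hx hdiv
  set u : Lam ℤ g := fun S => v (unpairedPart S) (fullPairs S) with hu
  have hxu : ∀ S, q ∣ x S - u S := fun S => by
    simpa [hu, block, fullPairs_subset_freePairs_unpairedPart, unpairedPart_union_pairUnion]
      using hxv (unpairedPart S) (fullPairs S)
  refine ⟨u, fun S => (x S - u S) / q, ?_,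
    fun S hS => hvD _ _ (by rwa [card_unpairedPart_add]), ?_⟩
  · funext S
    rw [Fop_apply, freePairs_eq_sdiff, Pi.zero_apply, ← hvsum (unpairedPart S) (fullPairs S)]
    refine sum_congr rfl fun i hi => ?_
    rw [← freePairs_eq_sdiff] at hi
    simp only [hu, unpairedPart_union_pair hi, fullPairs_union_pair hi]
  · funext S
    simp [Int.mul_ediv_cancel' (hxu S)]

end Lefschetz

theorem Ek_well_defined_mod_p_general (p g j k : ℕ) (hp : p.Prime)
    (hkp : k < p) (hmod : (j : ZMod p) = (k : ZMod p))
    (hj : j ≤ g + 1)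
    (f : Lam ℤ g) (hprim : Fop ℤ g f = 0) (hdeg : f ∈ Ldeg ℤ g (g + 1 - j)) :
    (∃ u w : Lam ℤ g, Fop ℤ g u = 0 ∧ u ∈ Ldeg ℤ g (g + 1 - j + 2 * k) ∧
      ((Eop ℤ g) ^ k) f = u + (p : ℤ) • w) ∧
    (∃ w : Lam ℤ g, ((Eop ℤ g) ^ p) f = (p : ℤ) • w) := by
  have hjk : (p : ℤ) ∣ k * ((g : ℤ) - (g + 1 - j : ℕ) - k + 1) := by
    have hpjk : (p : ℤ) ∣ j - k :=
      (ZMod.intCast_zmod_eq_zero_iff_dvd _ p).1 (by push_cast; rw [hmod, sub_self])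
    have hd : (g : ℤ) - (g + 1 - j : ℕ) - k + 1 = j - k := by
      rw [Nat.cast_sub hj]
      push_cast
      ring
    rw [hd]
    exact dvd_mul_of_dvd_right hpjk _
  refine ⟨Lefschetz.exists_primitive_add_smul (Lefschetz.Eop_pow_mem_Ldeg hdeg k)
    fun a ha => Lefschetz.dvd_Fdiv_Eop_pow hp hkp hdeg hprim hjk ha, ?_⟩
  refine ⟨(p - 1).factorial • Lefschetz.Ediv p f, ?_⟩
  rw [Lefschetz.Eop_pow_apply, ← Nat.mul_factorial_pred hp.ne_zero, mul_smul, natCast_zsmul]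

theorem Ek_well_defined_mod_p (p g j k : ℕ) (hp : p.Prime) (hodd : Odd p)
    (hk0 : 0 < k) (hkp : k < p) (hmod : (j : ZMod p) = (k : ZMod p))
    (hj : j ≤ g + 1)
    (f : Lam ℤ g) (hprim : Fop ℤ g f = 0) (hdeg : f ∈ Ldeg ℤ g (g + 1 - j)) :
    (∃ u w : Lam ℤ g, Fop ℤ g u = 0 ∧ u ∈ Ldeg ℤ g (g + 1 - j + 2 * k) ∧
      ((Eop ℤ g) ^ k) f = u + (p : ℤ) • w) ∧
    (∃ w : Lam ℤ g, ((Eop ℤ g) ^ p) f = (p : ℤ) • w) :=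
  Ek_well_defined_mod_p_general p g j k hp hkp hmod hj f hprim hdeg
end
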